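/- arXiv:1912.09146 — 3 statements merged into one kernel-verified Lean document; each statement's English description precedes it below -/
import Mathlib

section
/- Under the alternative H_1: T q ≠ 0, the Wald-type statistic S_n(T) = n (T q̂)ᵀ G_n (T q̂) converges in probability to ∞, i.e., for every C > 0 the probability P(S_n(T) ≤ C) tends to 0 as min_i n_i → ∞, where for each n and each sample point, G_n is a Moore–Penrose inverse of T Σ̂_n Tᵀ and Σ̂_n is any sequence of random km×km matrices converging in probability to Σ = diag(Σ^(1),…,Σ^(k)). -/
open MeasureTheory ProbabilityTheory Filter Topology Matrix

noncomputable section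

/-- Generalized inverse (quantile functional) `F⁻¹(p) = inf {t | F t ≥ p}`. -/
def qf (F : ℝ → ℝ) (p : ℝ) : ℝ := sInf {t : ℝ | p ≤ F t}

/-- Empirical CDF of the first `nn` entries of a sequence of reals. -/
def ecdf (nn : ℕ) (x : ℕ → ℝ) (t : ℝ) : ℝ :=
  (∑ j ∈ Finset.range nn, if x j ≤ t then (1 : ℝ) else 0) / nn

/-- Sample `p`-quantile of the first `nn` entries of a sequence of reals. -/
def sampleQuantile (nn : ℕ) (x : ℕ → ℝ) (p : ℝ) : ℝ := qf (ecdf nn x) p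

/-- `G` is the Moore–Penrose inverse of `A`. -/
def IsMoorePenrose {n : Type*} [Fintype n] [DecidableEq n] (A G : Matrix n n ℝ) : Prop :=
  A * G * A = A ∧ G * A * G = G ∧ (A * G)ᵀ = A * G ∧ (G * A)ᵀ = G * A

/-- The chi-square distribution with `d` degrees of freedom, i.e. the Gamma distribution with
shape `d/2` and rate `1/2`. -/
def chiSquareMeasure (d : ℕ) : Measure ℝ := gammaMeasure (d / 2 : ℝ) (1 / 2 : ℝ)

/-- Convergence in distribution of random elements `V ν` (under `P`) to the law `μ`. -/
def TendstoInDistribution {Ω : Type*} [MeasurableSpace Ω] (P : Measure Ω)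
    {E : Type*} [TopologicalSpace E] [MeasurableSpace E] (V : ℕ → Ω → E) (μ : Measure E) : Prop :=
  ∀ f : BoundedContinuousFunction E ℝ,
    Tendsto (fun ν => ∫ ω, f (V ν ω) ∂P) atTop (𝓝 (∫ x, f x ∂μ))

open Finset

/-! For any generalized inverse `G` of `T Σ̂ T`, the quadratic form `(T u)ᵀ G (T u)` equals
`(T u)ᵀ B(Σ̂)⁻¹ (T u)` with `B(Σ̂) = T Σ̂ T + (1 - T)` as soon as `B(Σ̂)` is invertible, and this
is a continuous function of `(Σ̂, u)`. The covariance `Σ` is positive definite (each block is a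
rescaled Brownian-bridge covariance `min(p_a, p_b) - p_a p_b`), hence so is `B(Σ)`, and under `H₁`
the limit value `(T q)ᵀ B(Σ)⁻¹ (T q)` is positive. Since `Σ̂ → Σ` and, by the strong law for the
empirical CDF, `q̂ → q` in probability, the statistic exceeds a fixed multiple of `n` with
probability tending to one. -/

section Quantile

variable {F : ℝ → ℝ} {p t t₀ t₁ : ℝ}

lemma bddBelow_setOf_le_apply (hF : Monotone F) (h₀ : F t₀ < p) : BddBelow {t | p ≤ F t} :=
  ⟨t₀, fun _ hs => le_of_not_gt fun hlt => (h₀.trans_le hs).not_ge (hF hlt.le)⟩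

lemma qf_le (hF : Monotone F) (h₀ : F t₀ < p) (ht : p ≤ F t) : qf F p ≤ t :=
  csInf_le (bddBelow_setOf_le_apply hF h₀) ht

lemma le_qf (hF : Monotone F) (h₁ : p ≤ F t₁) (ht : F t < p) : t ≤ qf F p :=
  le_csInf ⟨t₁, h₁⟩ fun _ hs => le_of_not_gt fun hlt => (ht.trans_le hs).not_ge (hF hlt.le)

lemma le_apply_qf (hF : Monotone F) (hc : Continuous F) (h₀ : F t₀ < p) (h₁ : p ≤ F t₁) :
    p ≤ F (qf F p) :=
  (isClosed_le continuous_const hc).csInf_mem ⟨t₁, h₁⟩ (bddBelow_setOf_le_apply hF h₀)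

lemma exists_lt_qf_sub_apply_lt (hF : Monotone F) (h₀ : F t₀ < p) {ε : ℝ} (hε : 0 < ε) :
    ∃ a, qf F p - ε < a ∧ F a < p :=
  ⟨qf F p - ε / 2, by linarith, lt_of_not_ge fun h => by linarith [qf_le hF h₀ h]⟩

lemma exists_lt_add_apply_gt_of_hasDerivAt {f' x : ℝ} (hF : HasDerivAt F f' x) (hf' : 0 < f')
    {ε : ℝ} (hε : 0 < ε) : ∃ b, b < x + ε ∧ F x < F b := by
  have hslope : ∀ᶠ y in 𝓝[>] x, 0 < slope F x y :=
    ((hasDerivAt_iff_tendsto_slope.1 hF).mono_left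
      (nhdsWithin_mono _ fun _ hy => ne_of_gt hy)).eventually (lt_mem_nhds hf')
  obtain ⟨b, hb, hxb⟩ := (hslope.and (Ioo_mem_nhdsGT (by linarith : x < x + ε))).exists
  rw [slope_def_field] at hb
  exact ⟨b, hxb.2, sub_pos.1 ((div_pos_iff_of_pos_right (sub_pos.2 hxb.1)).1 hb)⟩

end Quantile

lemma monotone_ecdf (n : ℕ) (x : ℕ → ℝ) : Monotone (ecdf n x) := fun s t hst => by
  unfold ecdf
  gcongr with j
  split_ifs with hs ht
  exacts [le_rfl, absurd (hs.trans hst) ht, zero_le_one, le_rfl]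

namespace Matrix

section GeneralizedInverse

variable {ι : Type*} [Fintype ι]

lemma dotProduct_mulVec_eq_of_mul_mul_eq {R : Type*} [CommRing R] {A G : Matrix ι ι R}
    {v w w' : ι → R} (hG : A * G * A = A) (hw : A *ᵥ w = v) (hw' : Aᵀ *ᵥ w' = v) :
    v ⬝ᵥ G *ᵥ v = v ⬝ᵥ w := by
  calc v ⬝ᵥ G *ᵥ v = (Aᵀ *ᵥ w') ⬝ᵥ G *ᵥ (A *ᵥ w) := by rw [hw', hw]
    _ = w' ⬝ᵥ (A * G * A) *ᵥ w := by
        rw [mulVec_transpose, ← dotProduct_mulVec, mulVec_mulVec, mulVec_mulVec]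
    _ = v ⬝ᵥ w := by rw [hG, dotProduct_mulVec, ← mulVec_transpose, hw']

variable [DecidableEq ι] {T M : Matrix ι ι ℝ}

lemma mul_mul_mul_nonsing_inv_add_one_sub (hTT : T * T = T)
    (hB : IsUnit (T * M * T + (1 - T)).det) :
    T * M * T * (T * M * T + (1 - T))⁻¹ = T := by
  have hTB : T * (T * M * T + (1 - T)) = T * M * T := by
    rw [mul_add, mul_sub, mul_one, hTT, sub_self, add_zero, ← mul_assoc, ← mul_assoc, hTT]
  calc T * M * T * (T * M * T + (1 - T))⁻¹
      = T * (T * M * T + (1 - T)) * (T * M * T + (1 - T))⁻¹ := by rw [hTB]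
    _ = T := by rw [mul_assoc, mul_nonsing_inv _ hB, mul_one]

lemma dotProduct_mulVec_eq_inv_add_one_sub_of_mul_mul_eq (hT : Tᵀ = T) (hTT : T * T = T)
    (hB : IsUnit (T * M * T + (1 - T)).det) {G : Matrix ι ι ℝ}
    (hG : T * M * T * G * (T * M * T) = T * M * T) (u : ι → ℝ) :
    (T *ᵥ u) ⬝ᵥ G *ᵥ (T *ᵥ u) = (T *ᵥ u) ⬝ᵥ (T * M * T + (1 - T))⁻¹ *ᵥ (T *ᵥ u) := by
  have hAt : (T * M * T)ᵀ = T * Mᵀ * T := by simp [transpose_mul, hT, mul_assoc]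
  have hBt : IsUnit (T * Mᵀ * T + (1 - T)).det := by
    rwa [← hAt, ← transpose_one, ← hT, ← transpose_sub, ← transpose_add, det_transpose, hT]
  refine dotProduct_mulVec_eq_of_mul_mul_eq hG
    (w' := (T * Mᵀ * T + (1 - T))⁻¹ *ᵥ (T *ᵥ u)) ?_ ?_
  · rw [mulVec_mulVec, mul_mul_mul_nonsing_inv_add_one_sub hTT hB, mulVec_mulVec, hTT]
  · rw [hAt, mulVec_mulVec, mul_mul_mul_nonsing_inv_add_one_sub hTT hBt, mulVec_mulVec, hTT]

lemma PosDef.mul_mul_add_one_sub (hM : M.PosDef) (hT : Tᵀ = T) (hTT : T * T = T) :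
    (T * M * T + (1 - T)).PosDef := by
  have hTh : Tᴴ = T := by rw [conjTranspose_eq_transpose_of_trivial, hT]
  have hidem : (1 - T) * (1 - T) = 1 - T := by
    rw [sub_mul, mul_sub, mul_sub, hTT]; simp
  refine PosDef.of_dotProduct_mulVec_pos ?_ fun x hx => ?_
  · have := isHermitian_conjTranspose_mul_mul T hM.1
    rw [hTh] at this
    exact this.add (isHermitian_one.sub hTh)
  simp only [star_trivial]
  have hrange : x ⬝ᵥ (T * M * T) *ᵥ x = (T *ᵥ x) ⬝ᵥ M *ᵥ (T *ᵥ x) := by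
    rw [← mulVec_mulVec, ← mulVec_mulVec, dotProduct_mulVec, ← mulVec_transpose, hT]
  have hker : x ⬝ᵥ (1 - T) *ᵥ x = ((1 - T) *ᵥ x) ⬝ᵥ ((1 - T) *ᵥ x) := by
    conv_lhs => rw [← hidem, ← mulVec_mulVec, dotProduct_mulVec, ← mulVec_transpose,
      transpose_sub, transpose_one, hT]
  rw [add_mulVec, dotProduct_add, hrange, hker]
  by_cases hTx : T *ᵥ x = 0
  · have : (1 - T) *ᵥ x = x := by rw [sub_mulVec, one_mulVec, hTx, sub_zero]
    simpa [hTx, this] using dotProduct_star_self_pos_iff.2 hx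
  · have h₁ := hM.dotProduct_mulVec_pos hTx
    have h₂ := dotProduct_star_self_nonneg ((1 - T) *ᵥ x)
    simp only [star_trivial] at h₁ h₂
    linarith

lemma continuousAt_dotProduct_inv_mulVec (T : Matrix ι ι ℝ) {M₀ : Matrix ι ι ℝ} {u₀ : ι → ℝ}
    (h : (T * M₀ * T + (1 - T)).det ≠ 0) :
    ContinuousAt (fun z : Matrix ι ι ℝ × (ι → ℝ) =>
      (T *ᵥ z.2) ⬝ᵥ (T * z.1 * T + (1 - T))⁻¹ *ᵥ (T *ᵥ z.2)) (M₀, u₀) := by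
  have hB : Continuous fun M : Matrix ι ι ℝ => T * M * T + (1 - T) :=
    ((continuous_const.matrix_mul continuous_id).matrix_mul continuous_const).add continuous_const
  have hinv : ContinuousAt (fun M : Matrix ι ι ℝ => (T * M * T + (1 - T))⁻¹) M₀ :=
    (continuousAt_matrix_inv _ (by simpa [Ring.inverse_eq_inv'] using continuousAt_inv₀ h)).comp
      hB.continuousAt
  have hform : Continuous fun w : (ι → ℝ) × Matrix ι ι ℝ => (T *ᵥ w.1) ⬝ᵥ w.2 *ᵥ (T *ᵥ w.1) :=
    (continuous_const.matrix_mulVec continuous_fst).dotProduct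
      (continuous_snd.matrix_mulVec (continuous_const.matrix_mulVec continuous_fst))
  exact hform.continuousAt.comp
    (f := fun z : Matrix ι ι ℝ × (ι → ℝ) => (z.2, (T * z.1 * T + (1 - T))⁻¹))
    (continuousAt_snd.prodMk hinv.fst')

lemma eventually_isUnit_det_and_lt_dotProduct_inv_mulVec (T : Matrix ι ι ℝ) {M₀ : Matrix ι ι ℝ}
    {u₀ : ι → ℝ} (h : (T * M₀ * T + (1 - T)).det ≠ 0) {c : ℝ}
    (hc : c < (T *ᵥ u₀) ⬝ᵥ (T * M₀ * T + (1 - T))⁻¹ *ᵥ (T *ᵥ u₀)) :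
    ∀ᶠ z in 𝓝 (M₀, u₀), IsUnit (T * z.1 * T + (1 - T)).det ∧
      c < (T *ᵥ z.2) ⬝ᵥ (T * z.1 * T + (1 - T))⁻¹ *ᵥ (T *ᵥ z.2) := by
  have hdet : Continuous fun z : Matrix ι ι ℝ × (ι → ℝ) => (T * z.1 * T + (1 - T)).det :=
    (((continuous_const.matrix_mul continuous_fst).matrix_mul continuous_const).add
      continuous_const).matrix_det
  filter_upwards [hdet.continuousAt.eventually_ne h,
    (continuousAt_dotProduct_inv_mulVec T h).eventually (lt_mem_nhds hc)] with z h₁ h₂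
  exact ⟨h₁.isUnit, h₂⟩

end GeneralizedInverse

section Covariance

variable {ι : Type*} [Fintype ι] [DecidableEq ι]

lemma posDef_diagonal_sub_vecMulVec {d : ι → ℝ} (hd : ∀ i, 0 < d i) (hsum : ∑ i, d i < 1) :
    (diagonal d - vecMulVec d d).PosDef := by
  refine PosDef.of_dotProduct_mulVec_pos ?_ fun x hx => ?_
  · refine IsHermitian.ext fun i j => ?_
    by_cases h : i = j
    · subst h; simp
    · simp [diagonal_apply_ne _ h, diagonal_apply_ne _ (Ne.symm h), vecMulVec_apply, mul_comm]
  have hCS : (∑ i, d i * x i) ^ 2 ≤ (∑ i, d i) * ∑ i, d i * x i ^ 2 :=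
    sum_sq_le_sum_mul_sum_of_sq_le_mul _ (fun i _ => (hd i).le)
      (fun i _ => mul_nonneg (hd i).le (sq_nonneg _)) fun i _ => le_of_eq (by ring)
  obtain ⟨i₀, hi₀⟩ := Function.ne_iff.1 hx
  have hpos : 0 < ∑ i, d i * x i ^ 2 :=
    sum_pos' (fun i _ => mul_nonneg (hd i).le (sq_nonneg _))
      ⟨i₀, mem_univ _, mul_pos (hd i₀) (pow_two_pos_of_ne_zero hi₀)⟩
  have hquad : star x ⬝ᵥ (diagonal d - vecMulVec d d) *ᵥ x
      = ∑ i, d i * x i ^ 2 - (∑ i, d i * x i) ^ 2 := by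
    simp only [star_trivial, sub_mulVec, dotProduct_sub, vecMulVec_mulVec, op_smul_eq_smul,
      dotProduct_smul, smul_eq_mul]
    simp [dotProduct, mulVec_diagonal, sq, mul_sum, mul_comm, mul_left_comm]
  rw [hquad]
  nlinarith

lemma posDef_of_apply_eq_ite {α : Type*} [Fintype α] {M : Matrix (ι × α) (ι × α) ℝ}
    {B : ι → Matrix α α ℝ} (hB : ∀ i, (B i).PosDef)
    (hM : ∀ x y, M x y = if x.1 = y.1 then B x.1 x.2 y.2 else 0) : M.PosDef := by
  refine PosDef.of_dotProduct_mulVec_pos (IsHermitian.ext fun x y => ?_) fun v hv => ?_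
  · rw [hM, hM, star_trivial]
    by_cases h : x.1 = y.1
    · rw [if_pos h.symm, if_pos h, h, ← (hB y.1).isHermitian.apply, star_trivial]
    · rw [if_neg (Ne.symm h), if_neg h]
  have hblocks : star v ⬝ᵥ M *ᵥ v =
      ∑ i, star (fun a => v (i, a)) ⬝ᵥ B i *ᵥ fun a => v (i, a) := by
    simp [dotProduct, mulVec, Fintype.sum_prod_type, hM]
  obtain ⟨⟨i₀, a₀⟩, h₀⟩ := Function.ne_iff.1 hv
  rw [hblocks]
  exact sum_pos' (fun i _ => (hB i).posSemidef.dotProduct_mulVec_nonneg _)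
    ⟨i₀, mem_univ _, (hB i₀).dotProduct_mulVec_pos (Function.ne_iff.2 ⟨a₀, h₀⟩)⟩

end Covariance

end Matrix

section BrownianBridge

variable {m : ℕ}

/-- `p j - p (j - 1)`, reading `p (-1)` as `0`. -/
def increments (p : Fin m → ℝ) (j : Fin m) : ℝ :=
  p j - if h : (j : ℕ) = 0 then 0 else p ⟨j - 1, by omega⟩

lemma sum_ite_le_increments (p : Fin m → ℝ) (a : Fin m) :
    ∑ j, (if j ≤ a then increments p j else 0) = p a := by
  obtain ⟨a, ha⟩ := a
  induction a with
  | zero =>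
    rw [sum_eq_single ⟨0, ha⟩
      (fun j _ hj => if_neg fun h => hj (Fin.ext (by simp [Fin.le_def] at h; omega)))
      (by simp)]
    simp [increments]
  | succ a ih =>
    have hsplit : ∀ j : Fin m, (if j ≤ ⟨a + 1, ha⟩ then increments p j else 0) =
        (if j ≤ ⟨a, by omega⟩ then increments p j else 0) +
          if j = ⟨a + 1, ha⟩ then increments p j else 0 := by
      intro j
      rcases lt_trichotomy (j : ℕ) (a + 1) with h | h | h
      · simp [Fin.le_def, Fin.ext_iff, h.ne, Nat.le_of_lt_succ h, h.le]
      · simp [Fin.le_def, Fin.ext_iff, h]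
      · simp [Fin.le_def, Fin.ext_iff, h.ne', not_le.2 h, not_le.2 (Nat.lt_of_succ_lt h)]
    rw [sum_congr rfl fun j _ => hsplit j, sum_add_distrib, ih, sum_ite_eq']
    simp [increments]

lemma increments_pos {p : Fin m → ℝ} (hp0 : ∀ r, 0 < p r) (hp : StrictMono p) (j : Fin m) :
    0 < increments p j := by
  unfold increments
  split_ifs with h
  · simpa using hp0 j
  · exact sub_pos.2 (hp (Fin.lt_def.2 (by simp; omega)))

/-- The factorisation `Φᵀ (diag d - d dᵀ) Φ` below writes the indicators `1{U ≤ p a}`, `U`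
uniform, through the cells between consecutive `p j`, whose probabilities are `d`. -/
lemma posDef_min_sub_mul {p : Fin m → ℝ} (hp0 : ∀ r, 0 < p r) (hp1 : ∀ r, p r < 1)
    (hp : StrictMono p) : (of fun a b => min (p a) (p b) - p a * p b).PosDef := by
  set d := increments p
  set Φ : Matrix (Fin m) (Fin m) ℝ := of fun j a => if j ≤ a then 1 else 0
  have hΦ : Function.Injective Φ.mulVec := by
    refine mulVec_injective_iff_isUnit.2 ((isUnit_iff_isUnit_det _).2 ?_)
    rw [det_of_isUpperTriangular (M := Φ) fun j a h => if_neg (not_le.2 h)]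
    simp [Φ]
  have hsum : ∑ j, d j < 1 := by
    cases m with
    | zero => simp
    | succ m =>
      rw [← sum_congr rfl fun j _ => if_pos (Fin.le_last j), sum_ite_le_increments]
      exact hp1 _
  have hfactor : of (fun a b => min (p a) (p b) - p a * p b) =
      Φᴴ * (diagonal d - vecMulVec d d) * Φ := by
    have hrow : d ᵥ* Φ = p := funext fun a => by
      simpa [vecMul, dotProduct, Φ] using sum_ite_le_increments p a
    rw [mul_sub, sub_mul, mul_vecMulVec, vecMulVec_mul, conjTranspose_eq_transpose_of_trivial,
      mulVec_transpose, hrow]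
    ext a b
    have hmin : (Φᵀ * diagonal d * Φ) a b = p (min a b) := by
      rw [← sum_ite_le_increments p (min a b), mul_apply]
      refine sum_congr rfl fun j _ => ?_
      by_cases ha : j ≤ a <;> by_cases hb : j ≤ b <;> simp [Φ, ha, hb, d]
    rw [Matrix.sub_apply, hmin, vecMulVec_apply, of_apply, hp.monotone.map_min]
  rw [hfactor]
  exact (posDef_diagonal_sub_vecMulVec (increments_pos hp0 hp) hsum).conjTranspose_mul_mul_same hΦ

lemma posDef_of_apply_eq_min_sub_mul_div {ι : Type*} [Fintype ι] [DecidableEq ι]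
    {p : Fin m → ℝ} (hp0 : ∀ r, 0 < p r) (hp1 : ∀ r, p r < 1) (hp : StrictMono p)
    {κ : ι → ℝ} (hκ : ∀ i, 0 < κ i) {g : ι → Fin m → ℝ} (hg : ∀ i r, 0 < g i r)
    {S : Matrix (ι × Fin m) (ι × Fin m) ℝ}
    (hS : ∀ x y, S x y = if x.1 = y.1 then
      (min (p x.2) (p y.2) - p x.2 * p y.2) / (κ x.1 * g x.1 x.2 * g x.1 y.2) else 0) :
    S.PosDef := by
  set D : ι → Matrix (Fin m) (Fin m) ℝ := fun i => diagonal fun r => (g i r)⁻¹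
  refine posDef_of_apply_eq_ite (B := fun i => (κ i)⁻¹ • ((D i)ᴴ *
    (of fun a b => min (p a) (p b) - p a * p b) * D i)) (fun i => ?_) fun x y => ?_
  · refine ((posDef_min_sub_mul hp0 hp1 hp).conjTranspose_mul_mul_same ?_).smul
      (inv_pos.2 (hκ i))
    exact mulVec_injective_iff_isUnit.2
      (isUnit_diagonal.2 (Pi.isUnit_iff.2 fun r => (inv_ne_zero (hg i r).ne').isUnit))
  · rw [hS]
    split_ifs with h
    · simp [D, diagonal_mul, mul_diagonal, h]
      field_simp
    · rfl

end BrownianBridge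

section InProbability

variable {Ω ι E : Type*} [MeasurableSpace Ω] {μ : Measure Ω} {l : Filter ι}

/-- Convergence in probability to a constant, phrased with neighbourhoods so that it applies to
matrices, which carry a topology but no metric instance. -/
def TendstoInProbability [TopologicalSpace E] (μ : Measure Ω) (Y : ι → Ω → E) (l : Filter ι)
    (c : E) : Prop :=
  ∀ U ∈ 𝓝 c, Tendsto (fun i => μ {ω | Y i ω ∉ U}) l (𝓝 0)

lemma tendsto_measure_of_le {s : ι → Set Ω} {b : ι → ENNReal} (hb : Tendsto b l (𝓝 0))
    (hs : ∀ᶠ i in l, μ (s i) ≤ b i) : Tendsto (fun i => μ (s i)) l (𝓝 0) :=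
  tendsto_of_tendsto_of_tendsto_of_le_of_le' tendsto_const_nhds hb
    (Eventually.of_forall fun _ => zero_le) hs

namespace TendstoInProbability

variable [TopologicalSpace E] {Y : ι → Ω → E} {c : E}

lemma comp {κ : Type*} {l' : Filter κ} (h : TendstoInProbability μ Y l c) {N : κ → ι}
    (hN : Tendsto N l' l) : TendstoInProbability μ (fun j => Y (N j)) l' c :=
  fun U hU => (h U hU).comp hN

lemma prodMk {F : Type*} [TopologicalSpace F] {Z : ι → Ω → F} {d : F}
    (hY : TendstoInProbability μ Y l c) (hZ : TendstoInProbability μ Z l d) :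
    TendstoInProbability μ (fun i ω => (Y i ω, Z i ω)) l (c, d) := by
  intro U hU
  obtain ⟨V, hV, W, hW, hVW⟩ := mem_nhds_prod_iff.1 hU
  refine tendsto_measure_of_le (by simpa using (hY V hV).add (hZ W hW))
    (Eventually.of_forall fun i => (measure_mono fun ω hω => ?_).trans (measure_union_le _ _))
  by_contra h
  simp only [Set.mem_union, Set.mem_ofPred_eq, not_or, not_not] at h
  exact hω (hVW ⟨h.1, h.2⟩)

lemma pi {α : Type*} [Fintype α] {π : α → Type*} [∀ a, TopologicalSpace (π a)]
    {Y : ι → Ω → ∀ a, π a} {c : ∀ a, π a}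
    (h : ∀ a, TendstoInProbability μ (fun i ω => Y i ω a) l (c a)) :
    TendstoInProbability μ Y l c := by
  intro U hU
  rw [nhds_pi, mem_pi] at hU
  obtain ⟨I, -, t, ht, hIt⟩ := hU
  refine tendsto_measure_of_le (by simpa using tendsto_finsetSum univ fun a _ => h a (t a) (ht a))
    (Eventually.of_forall fun i =>
      (measure_mono fun ω hω => ?_).trans (measure_iUnion_fintype_le _ _))
  by_contra h
  simp only [Set.mem_iUnion, Set.mem_ofPred_eq, not_exists, not_not] at h
  exact hω (hIt fun a _ => h a)

end TendstoInProbability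

lemma MeasureTheory.TendstoInMeasure.tendstoInProbability [PseudoEMetricSpace E]
    {Y : ι → Ω → E} {c : E} (h : TendstoInMeasure μ Y l fun _ => c) :
    TendstoInProbability μ Y l c := by
  intro U hU
  obtain ⟨ε, hε, hball⟩ := EMetric.mem_nhds_iff.1 hU
  exact tendsto_measure_of_le (h ε hε) (Eventually.of_forall fun i => measure_mono
    fun ω (hω : Y i ω ∉ U) => show ε ≤ edist (Y i ω) c from not_lt.1 fun hlt => hω (hball hlt))

/-- The sample quantile lies between `a` and `b` as soon as the empirical CDF is below `p` at `a`
and above `p` at `b`. -/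
lemma tendstoInProbability_sampleQuantile {X : ℕ → Ω → ℝ} {F : ℝ → ℝ} {p q : ℝ}
    (hecdf : ∀ t, TendstoInProbability μ (fun n ω => ecdf n (fun j => X j ω) t) atTop (F t))
    (hlow : ∀ ε > 0, ∃ a, q - ε < a ∧ F a < p) (hup : ∀ ε > 0, ∃ b, b < q + ε ∧ p < F b) :
    TendstoInProbability μ (fun n ω => sampleQuantile n (fun j => X j ω) p) atTop q := by
  intro U hU
  obtain ⟨ε, hε, hball⟩ := Metric.mem_nhds_iff.1 hU
  obtain ⟨a, ha, hFa⟩ := hlow ε hε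
  obtain ⟨b, hb, hFb⟩ := hup ε hε
  have hbad := (hecdf a _ (Iio_mem_nhds hFa)).add (hecdf b _ (Ioi_mem_nhds hFb))
  rw [add_zero] at hbad
  refine tendsto_measure_of_le hbad (Eventually.of_forall fun n =>
    (measure_mono fun ω hω => ?_).trans (measure_union_le _ _))
  by_contra h
  simp only [Set.mem_union, Set.mem_ofPred_eq, not_or, not_not, Set.mem_Iio, Set.mem_Ioi] at h
  have hlo : a ≤ sampleQuantile n (fun j => X j ω) p := le_qf (monotone_ecdf n _) h.2.le h.1
  have hhi : sampleQuantile n (fun j => X j ω) p ≤ b := qf_le (monotone_ecdf n _) h.1 h.2.le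
  refine hω (hball ?_)
  dsimp only
  rw [Metric.mem_ball, Real.dist_eq, abs_sub_lt_iff]
  constructor <;> linarith

lemma TendstoInProbability.tendsto_measure_le_of_mul_le [TopologicalSpace E] {Y : ι → Ω → E}
    {y₀ : E} (hY : TendstoInProbability μ Y l y₀) {U : Set E} (hU : U ∈ 𝓝 y₀) {a : ι → ℝ}
    (ha : Tendsto a l atTop) {c : ℝ} (hc : 0 < c) {Z : ι → Ω → ℝ}
    (hZ : ∀ i ω, Y i ω ∈ U → a i * c ≤ Z i ω) (C : ℝ) :
    Tendsto (fun i => μ {ω | Z i ω ≤ C}) l (𝓝 0) := by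
  refine tendsto_measure_of_le (hY U hU) ((ha.eventually_gt_atTop (C / c)).mono
    fun i hi => measure_mono fun ω (hω : Z i ω ≤ C) hYU => ?_)
  rw [div_lt_iff₀ hc] at hi
  linarith [hZ i ω hYU]

end InProbability

section EmpiricalCDF

variable {Ω : Type*} [MeasurableSpace Ω] {μ : Measure Ω} [IsProbabilityMeasure μ]

lemma cdf_map_apply {X : Ω → ℝ} (hX : Measurable X) (t : ℝ) :
    cdf (μ.map X) t = μ.real {ω | X ω ≤ t} := by
  have := Measure.isProbabilityMeasure_map (μ := μ) hX.aemeasurable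
  rw [cdf_eq_real, map_measureReal_apply hX measurableSet_Iic]
  rfl

lemma identDistrib_of_measureReal_le {X Y : Ω → ℝ} (hX : Measurable X) (hY : Measurable Y)
    (h : ∀ t, μ.real {ω | X ω ≤ t} = μ.real {ω | Y ω ≤ t}) : IdentDistrib X Y μ μ := by
  have := Measure.isProbabilityMeasure_map (μ := μ) hX.aemeasurable
  have := Measure.isProbabilityMeasure_map (μ := μ) hY.aemeasurable
  exact ⟨hX.aemeasurable, hY.aemeasurable, Measure.eq_of_cdf _ _ (StieltjesFunction.ext fun t => by
    rw [cdf_map_apply hX, cdf_map_apply hY, h])⟩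

variable {X : ℕ → Ω → ℝ}

lemma tendsto_ecdf_ae (hmeas : ∀ j, Measurable (X j))
    (hindep : Pairwise fun i j => IndepFun (X i) (X j) μ)
    (hident : ∀ j, IdentDistrib (X j) (X 0) μ μ) (t : ℝ) :
    ∀ᵐ ω ∂μ, Tendsto (fun n => ecdf n (fun j => X j ω) t) atTop
      (𝓝 (μ.real {ω | X 0 ω ≤ t})) := by
  set g : ℝ → ℝ := (Set.Iic t).indicator 1
  have hg : Measurable g := measurable_const.indicator measurableSet_Iic
  have hg0 : g ∘ X 0 = (X 0 ⁻¹' Set.Iic t).indicator 1 := rfl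
  have hmean : μ[g ∘ X 0] = μ.real {ω | X 0 ω ≤ t} := by
    rw [hg0, integral_indicator_one ((hmeas 0) measurableSet_Iic)]
    rfl
  have hint : Integrable (g ∘ X 0) μ :=
    hg0 ▸ (integrable_const 1).indicator ((hmeas 0) measurableSet_Iic)
  filter_upwards [strong_law_ae (fun j => g ∘ X j) hint (fun i j hij => (hindep hij).comp hg hg)
    fun j => (hident j).comp hg] with ω hω
  rw [← hmean]
  convert hω using 2
  simp [ecdf, g, Set.indicator_apply, div_eq_inv_mul]

lemma tendstoInProbability_ecdf (hmeas : ∀ j, Measurable (X j))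
    (hindep : Pairwise fun i j => IndepFun (X i) (X j) μ)
    (hident : ∀ j, IdentDistrib (X j) (X 0) μ μ) (t : ℝ) :
    TendstoInProbability μ (fun n ω => ecdf n (fun j => X j ω) t) atTop
      (μ.real {ω | X 0 ω ≤ t}) :=
  (tendstoInMeasure_of_tendsto_ae (fun _ => ((Finset.measurable_sum _ fun j _ =>
    Measurable.ite (measurableSet_le (hmeas j) measurable_const) measurable_const
      measurable_const).div_const _).aestronglyMeasurable)
    (tendsto_ecdf_ae hmeas hindep hident t)).tendstoInProbability

theorem tendstoInProbability_sampleQuantile_of_hasDerivAt {F : ℝ → ℝ}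
    (hmeas : ∀ j, Measurable (X j)) (hindep : Pairwise fun i j => IndepFun (X i) (X j) μ)
    (hdist : ∀ j t, μ.real {ω | X j ω ≤ t} = F t) (hF : Continuous F) {p f' : ℝ}
    (hp0 : 0 < p) (hp1 : p < 1) (hderiv : HasDerivAt F f' (qf F p)) (hf' : 0 < f') :
    TendstoInProbability μ (fun n ω => sampleQuantile n (fun j => X j ω) p) atTop (qf F p) := by
  have hcdf : cdf (μ.map (X 0)) = F :=
    funext fun t => (cdf_map_apply (hmeas 0) t).trans (hdist 0 t)
  have hmono : Monotone F := hcdf ▸ monotone_cdf _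
  obtain ⟨t₀, ht₀⟩ := ((hcdf ▸ tendsto_cdf_atBot _).eventually (gt_mem_nhds hp0)).exists
  obtain ⟨t₁, ht₁⟩ := ((hcdf ▸ tendsto_cdf_atTop _).eventually (lt_mem_nhds hp1)).exists
  have hident : ∀ j, IdentDistrib (X j) (X 0) μ μ := fun j =>
    identDistrib_of_measureReal_le (hmeas j) (hmeas 0) fun t => (hdist j t).trans (hdist 0 t).symm
  refine tendstoInProbability_sampleQuantile
    (fun t => hdist 0 t ▸ tendstoInProbability_ecdf hmeas hindep hident t)
    (fun ε hε => exists_lt_qf_sub_apply_lt hmono ht₀ hε) fun ε hε => ?_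
  obtain ⟨b, hb, hFb⟩ := exists_lt_add_apply_gt_of_hasDerivAt hderiv hf' hε
  exact ⟨b, hb, (le_apply_qf hmono hF ht₀ ht₁.le).trans_lt hFb⟩

end EmpiricalCDF

theorem statement3_general
    {Ω : Type*} [MeasurableSpace Ω] (P : Measure Ω) [IsProbabilityMeasure P]
    (k m : ℕ) (p : Fin m → ℝ)
    (hp0 : ∀ r, 0 < p r) (hp1 : ∀ r, p r < 1) (hpmono : StrictMono p)
    (F : Fin k → ℝ → ℝ) (hFcont : ∀ i, Continuous (F i))
    (X : Fin k → ℕ → Ω → ℝ) (hmeas : ∀ i j, Measurable (X i j))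
    (hindep : iIndepFun
      (fun pr : Fin k × ℕ => X pr.1 pr.2) P)
    (hdist : ∀ i j t, (P {ω | X i j ω ≤ t}).toReal = F i t)
    (N : ℕ → Fin k → ℕ) (n : ℕ → ℕ) (hn : ∀ ν, n ν = ∑ i, N ν i)
    (κ : Fin k → ℝ) (hκ : ∀ i, 0 < κ i ∧ κ i < 1)
    (hNlim : ∀ i, Tendsto (fun ν => N ν i) atTop atTop)
    (f : Fin k → ℝ → ℝ)
    -- Assumption 1: each `F i` is continuously differentiable at `q_{ir}` with positive derivative
    (hf : ∀ i r, (∀ᶠ x in 𝓝 (qf (F i) (p r)), HasDerivAt (F i) (f i x) x)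
        ∧ ContinuousAt (f i) (qf (F i) (p r)) ∧ 0 < f i (qf (F i) (p r)))
    -- the limiting block-diagonal covariance matrix Σ = diag(Σ⁽¹⁾, …, Σ⁽ᵏ⁾)
    (S : Matrix (Fin k × Fin m) (Fin k × Fin m) ℝ)
    (hS : ∀ x y : Fin k × Fin m, S x y =
      if x.1 = y.1 then
        (min (p x.2) (p y.2) - p x.2 * p y.2) /
          (κ x.1 * f x.1 (qf (F x.1) (p x.2)) * f x.1 (qf (F x.1) (p y.2)))
      else 0)
    -- the contrast projection matrix T
    (T : Matrix (Fin k × Fin m) (Fin k × Fin m) ℝ)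
    (hTsymm : Tᵀ = T) (hTidem : T * T = T)
    -- the alternative H₁ : T q ≠ 0
    (hH1 : T.mulVec (fun x => qf (F x.1) (p x.2)) ≠ 0)
    -- covariance estimators converging in probability to Σ
    (Shat : ℕ → Ω → Matrix (Fin k × Fin m) (Fin k × Fin m) ℝ)
    (hShat : ∀ ε > (0 : ℝ), ∀ x y,
      Tendsto (fun ν => P {ω | ε ≤ |Shat ν ω x y - S x y|}) atTop (𝓝 0))
    -- for each sample point, a Moore–Penrose inverse of `T Σ̂ₙ Tᵀ`
    (G : ℕ → Ω → Matrix (Fin k × Fin m) (Fin k × Fin m) ℝ)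
    (hG : ∀ ν ω, IsMoorePenrose (T * Shat ν ω * Tᵀ) (G ν ω)) :
    ∀ C > (0 : ℝ),
      Tendsto (fun ν => P {ω |
        (n ν : ℝ) *
          (T.mulVec (fun x => sampleQuantile (N ν x.1) (fun j => X x.1 j ω) (p x.2)) ⬝ᵥ
            (G ν ω).mulVec
              (T.mulVec (fun x => sampleQuantile (N ν x.1) (fun j => X x.1 j ω) (p x.2))))
          ≤ C}) atTop (𝓝 0) := by
  intro C _
  set q : Fin k × Fin m → ℝ := fun x => qf (F x.1) (p x.2)
  set qhat : ℕ → Ω → Fin k × Fin m → ℝ :=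
    fun ν ω x => sampleQuantile (N ν x.1) (fun j => X x.1 j ω) (p x.2)
  obtain ⟨i₀, -⟩ : Nonempty (Fin k × Fin m) :=
    not_isEmpty_iff.1 fun h => hH1 (Subsingleton.elim _ _)
  have hB : (T * S * T + (1 - T)).PosDef :=
    (posDef_of_apply_eq_min_sub_mul_div hp0 hp1 hpmono (fun i => (hκ i).1)
      (fun i r => (hf i r).2.2) hS).mul_mul_add_one_sub hTsymm hTidem
  have hlim : 0 < (T *ᵥ q) ⬝ᵥ (T * S * T + (1 - T))⁻¹ *ᵥ (T *ᵥ q) := by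
    simpa only [star_trivial] using hB.inv.dotProduct_mulVec_pos hH1
  have hqhat : TendstoInProbability P qhat atTop q := .pi fun x =>
    (tendstoInProbability_sampleQuantile_of_hasDerivAt (hmeas x.1)
      (fun j j' hjj' => hindep.indepFun (i := (x.1, j)) (j := (x.1, j')) (by simpa using hjj'))
      (fun j t => hdist x.1 j t) (hFcont x.1) (hp0 x.2) (hp1 x.2)
      (hf x.1 x.2).1.self_of_nhds (hf x.1 x.2).2.2).comp (hNlim x.1)
  have hShatP : TendstoInProbability P Shat atTop S := .pi fun x => .pi fun y =>
    (tendstoInMeasure_iff_dist.2 fun ε hε => by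
      simpa [Real.dist_eq] using hShat ε hε x y).tendstoInProbability
  have hn : Tendsto (fun ν => (n ν : ℝ)) atTop atTop :=
    tendsto_natCast_atTop_atTop.comp (tendsto_atTop_mono (fun ν => (hn ν).symm ▸
      single_le_sum (fun i _ => Nat.zero_le (N ν i)) (mem_univ i₀)) (hNlim i₀))
  refine (hShatP.prodMk hqhat).tendsto_measure_le_of_mul_le
    (eventually_isUnit_det_and_lt_dotProduct_inv_mulVec T hB.det_pos.ne' (half_lt_self hlim))
    hn (half_pos hlim) (fun ν ω ⟨hdet, hlt⟩ => ?_) C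
  have hGν : T * Shat ν ω * T * G ν ω * (T * Shat ν ω * T) = T * Shat ν ω * T := by
    simpa only [hTsymm] using (hG ν ω).1
  exact (mul_le_mul_of_nonneg_left hlt.le (Nat.cast_nonneg _)).trans_eq (congrArg _
    (dotProduct_mulVec_eq_inv_add_one_sub_of_mul_mul_eq hTsymm hTidem hdet hGν (qhat ν ω)).symm)

/-- under `H₁ : T q ≠ 0` the Wald-type statistic
`Sₙ(T) = n (T q̂)ᵀ Gₙ (T q̂)` converges in probability to `∞`: for every `C > 0`,
`P(Sₙ(T) ≤ C) → 0`. Here `Gₙ` is a Moore–Penrose inverse of `T Σ̂ₙ Tᵀ` and `Σ̂ₙ → Σ`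
in probability. -/
theorem statement3
    {Ω : Type*} [MeasurableSpace Ω] (P : Measure Ω) [IsProbabilityMeasure P]
    (k m : ℕ) (p : Fin m → ℝ)
    (hp0 : ∀ r, 0 < p r) (hp1 : ∀ r, p r < 1) (hpmono : StrictMono p)
    (F : Fin k → ℝ → ℝ) (hFcont : ∀ i, Continuous (F i))
    (X : Fin k → ℕ → Ω → ℝ) (hmeas : ∀ i j, Measurable (X i j))
    (hindep : iIndepFun
      (fun pr : Fin k × ℕ => X pr.1 pr.2) P)
    (hdist : ∀ i j t, (P {ω | X i j ω ≤ t}).toReal = F i t)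
    (N : ℕ → Fin k → ℕ) (n : ℕ → ℕ) (hn : ∀ ν, n ν = ∑ i, N ν i)
    (κ : Fin k → ℝ) (hκ : ∀ i, 0 < κ i ∧ κ i < 1)
    (hNlim : ∀ i, Tendsto (fun ν => N ν i) atTop atTop)
    (hκlim : ∀ i, Tendsto (fun ν => (N ν i : ℝ) / (n ν)) atTop (𝓝 (κ i)))
    (f : Fin k → ℝ → ℝ)
    -- Assumption 1: each `F i` is continuously differentiable at `q_{ir}` with positive derivative
    (hf : ∀ i r, (∀ᶠ x in 𝓝 (qf (F i) (p r)), HasDerivAt (F i) (f i x) x)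
        ∧ ContinuousAt (f i) (qf (F i) (p r)) ∧ 0 < f i (qf (F i) (p r)))
    -- the limiting block-diagonal covariance matrix Σ = diag(Σ⁽¹⁾, …, Σ⁽ᵏ⁾)
    (S : Matrix (Fin k × Fin m) (Fin k × Fin m) ℝ)
    (hS : ∀ x y : Fin k × Fin m, S x y =
      if x.1 = y.1 then
        (min (p x.2) (p y.2) - p x.2 * p y.2) /
          (κ x.1 * f x.1 (qf (F x.1) (p x.2)) * f x.1 (qf (F x.1) (p y.2)))
      else 0)
    -- the contrast projection matrix T
    (T : Matrix (Fin k × Fin m) (Fin k × Fin m) ℝ)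
    (hTsymm : Tᵀ = T) (hTidem : T * T = T) (hT1 : T.mulVec (fun _ => 1) = 0)
    -- the alternative H₁ : T q ≠ 0
    (hH1 : T.mulVec (fun x => qf (F x.1) (p x.2)) ≠ 0)
    -- covariance estimators converging in probability to Σ
    (Shat : ℕ → Ω → Matrix (Fin k × Fin m) (Fin k × Fin m) ℝ)
    (hShat : ∀ ε > (0 : ℝ), ∀ x y,
      Tendsto (fun ν => P {ω | ε ≤ |Shat ν ω x y - S x y|}) atTop (𝓝 0))
    -- for each sample point, a Moore–Penrose inverse of `T Σ̂ₙ Tᵀ`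
    (G : ℕ → Ω → Matrix (Fin k × Fin m) (Fin k × Fin m) ℝ)
    (hG : ∀ ν ω, IsMoorePenrose (T * Shat ν ω * Tᵀ) (G ν ω)) :
    ∀ C > (0 : ℝ),
      Tendsto (fun ν => P {ω |
        (n ν : ℝ) *
          (T.mulVec (fun x => sampleQuantile (N ν x.1) (fun j => X x.1 j ω) (p x.2)) ⬝ᵥ
            (G ν ω).mulVec
              (T.mulVec (fun x => sampleQuantile (N ν x.1) (fun j => X x.1 j ω) (p x.2))))
          ≤ C}) atTop (𝓝 0) :=
  statement3_general P k m p hp0 hp1 hpmono F hFcont X hmeas hindep hdist N n hn κ hκ hNlim f hf S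
    hS T hTsymm hTidem hH1 Shat hShat G hG
end
end

section
/- Let Σ ∈ ℝ^{d×d} be a symmetric positive definite matrix, T ∈ ℝ^{d×d} any matrix, and q ∈ ℝ^d a vector with T q ≠ 0. If G is a Moore–Penrose inverse of T Σ Tᵀ, then the quadratic form (T q)ᵀ G (T q) is strictly positive. -/
open Matrix
/-!
Write `A = T Σ Tᵀ`. Since `Σ` is positive definite, `A x = 0` forces `Tᵀ x = 0`, so `A` and `Tᵀ`
have the same kernel, hence `A` and `T` the same rank, and `range A = range T`. Thus `T q = A x`
for some `x`, and `A G A = A` with `A` symmetric gives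
`(T q)ᵀ G (T q) = xᵀ A G A x = xᵀ A x = (Tᵀ x)ᵀ Σ (Tᵀ x)`, which is positive because
`Tᵀ x ≠ 0` (otherwise `T q = A x = 0`).
-/

namespace Matrix

variable {m n : Type*} [Fintype m] [Fintype n]

theorem dotProduct_transpose_mul_mul_mulVec (S : Matrix n n ℝ) (B : Matrix n m ℝ) (x : m → ℝ) :
    x ⬝ᵥ (Bᵀ * S * B) *ᵥ x = B *ᵥ x ⬝ᵥ S *ᵥ (B *ᵥ x) := by
  rw [← mulVec_mulVec, ← mulVec_mulVec, dotProduct_mulVec, vecMul_transpose]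

namespace PosDef

variable {S : Matrix n n ℝ}

theorem dotProduct_transpose_mul_mul_mulVec_pos (hS : S.PosDef) {B : Matrix n m ℝ} {x : m → ℝ}
    (hx : B *ᵥ x ≠ 0) : 0 < x ⬝ᵥ (Bᵀ * S * B) *ᵥ x := by
  rw [dotProduct_transpose_mul_mul_mulVec]
  simpa only [star_trivial] using hS.dotProduct_mulVec_pos hx

theorem ker_mulVecLin_transpose_mul_mul (hS : S.PosDef) (B : Matrix n m ℝ) :
    LinearMap.ker (Bᵀ * S * B).mulVecLin = LinearMap.ker B.mulVecLin := by
  ext x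
  simp only [LinearMap.mem_ker, mulVecLin_apply]
  refine ⟨fun h => ?_, fun h => by rw [← mulVec_mulVec, h, mulVec_zero]⟩
  by_contra hx
  exact (hS.dotProduct_transpose_mul_mul_mulVec_pos hx).ne' (by rw [h, dotProduct_zero])

theorem rank_transpose_mul_mul (hS : S.PosDef) (B : Matrix n m ℝ) :
    (Bᵀ * S * B).rank = B.rank := by
  refine add_right_cancel (b := Module.finrank ℝ (LinearMap.ker B.mulVecLin)) ?_
  rw [rank, rank, ← hS.ker_mulVecLin_transpose_mul_mul B, LinearMap.finrank_range_add_finrank_ker,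
    hS.ker_mulVecLin_transpose_mul_mul B, LinearMap.finrank_range_add_finrank_ker]

theorem range_mulVecLin_mul_mul_transpose (hS : S.PosDef) (T : Matrix m n ℝ) :
    LinearMap.range (T * S * Tᵀ).mulVecLin = LinearMap.range T.mulVecLin := by
  refine Submodule.eq_of_le_of_finrank_eq ?_ ?_
  · rw [Matrix.mul_assoc, mulVecLin_mul]
    exact LinearMap.range_comp_le_range _ _
  · rw [← rank, ← rank, ← rank_transpose T, ← hS.rank_transpose_mul_mul Tᵀ, transpose_transpose]

end PosDef

theorem IsSymm.dotProduct_mulVec_mulVec_of_mul_mul_eq_self {A G : Matrix n n ℝ} (hA : A.IsSymm)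
    (hAGA : A * G * A = A) (x : n → ℝ) : A *ᵥ x ⬝ᵥ G *ᵥ (A *ᵥ x) = x ⬝ᵥ A *ᵥ x := by
  rw [← dotProduct_transpose_mul_mul_mulVec, hA.eq, hAGA]

end Matrix

/-- if `Σ` is symmetric positive definite, `T q ≠ 0` and `G` is a Moore–Penrose
inverse of `T Σ Tᵀ`, then the quadratic form `(T q)ᵀ G (T q)` is strictly positive. -/
theorem statement4 {d : ℕ} (S T : Matrix (Fin d) (Fin d) ℝ) (q : Fin d → ℝ)
    (hS : S.PosDef) (hTq : T.mulVec q ≠ 0)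
    (G : Matrix (Fin d) (Fin d) ℝ) (hG : IsMoorePenrose (T * S * Tᵀ) G) :
    0 < T.mulVec q ⬝ᵥ G.mulVec (T.mulVec q) := by
  obtain ⟨x, hx⟩ : T *ᵥ q ∈ LinearMap.range (T * S * Tᵀ).mulVecLin := by
    rw [hS.range_mulVecLin_mul_mul_transpose]
    exact LinearMap.mem_range_self _ q
  rw [mulVecLin_apply] at hx
  have hA : (T * S * Tᵀ).IsSymm := by
    rw [IsSymm, transpose_mul, transpose_mul, transpose_transpose,
      (isHermitian_iff_isSymm.mp hS.isHermitian).eq, Matrix.mul_assoc]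
  rw [← hx, hA.dotProduct_mulVec_mulVec_of_mul_mul_eq_self hG.1]
  have hTx : Tᵀ *ᵥ x ≠ 0 := fun h => hTq (by rw [← hx, ← mulVec_mulVec, h, mulVec_zero])
  simpa only [transpose_transpose] using hS.dotProduct_transpose_mul_mul_mulVec_pos hTx
end

section
/- Let G : ℝ → ℝ be differentiable at a point u with derivative g(u). Let (δ_{n,1}) and (δ_{n,2}) be real sequences converging to 0 with δ_{n,1} ≠ δ_{n,2} for all n, and suppose that either limsup_n (δ_{n,1}/δ_{n,2}) < 1 or liminf_n (δ_{n,1}/δ_{n,2}) > 1, where for δ_{n,2} = 0 the ratio δ_{n,1}/δ_{n,2} is interpreted as +∞ if δ_{n,1} > 0 and as −∞ if δ_{n,1} < 0. Then (G(u + δ_{n,2}) − G(u + δ_{n,1}))/(δ_{n,2} − δ_{n,1}) → g(u) as n → ∞. -/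
/-!
Write `G (u + h) = G u + g(u) h + φ h` with `φ h = o(h)`. The difference quotient is then
`g(u) + (φ δ₂ - φ δ₁) / (δ₂ - δ₁)`, so it suffices that `δ₂ = O(δ₂ - δ₁)` (and hence also
`δ₁ = O(δ₂ - δ₁)`). The condition on the ratio gives this: if `δ₁ / δ₂ ≤ r < 1` or
`δ₁ / δ₂ ≥ r > 1`, then `|δ₂ - δ₁| = |δ₂| |1 - δ₁ / δ₂| ≥ |r - 1| |δ₂|`.
-/

open Filter Topology Asymptotics

noncomputable def extendedRatio (x y : ℝ) : EReal :=
  if y = 0 then (if 0 < x then ⊤ else ⊥) else ((x / y : ℝ) : EReal)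

lemma abs_sub_eq_abs_mul_abs_one_sub_div {x y : ℝ} (hy : y ≠ 0) :
    |y - x| = |y| * |1 - x / y| := by
  rw [← abs_mul, mul_one_sub, mul_div_cancel₀ x hy]

lemma one_sub_mul_abs_le_abs_sub_of_extendedRatio_lt {x y r : ℝ}
    (h : extendedRatio x y < r) : (1 - r) * |y| ≤ |y - x| := by
  by_cases hy : y = 0
  · simp [hy]
  have hr : x / y < r := by simpa [extendedRatio, hy] using h
  rw [abs_sub_eq_abs_mul_abs_one_sub_div hy]
  nlinarith [le_abs_self (1 - x / y), abs_nonneg y]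

lemma sub_one_mul_abs_le_abs_sub_of_lt_extendedRatio {x y r : ℝ}
    (h : r < extendedRatio x y) : (r - 1) * |y| ≤ |y - x| := by
  by_cases hy : y = 0
  · simp [hy]
  have hr : r < x / y := by simpa [extendedRatio, hy] using h
  rw [abs_sub_eq_abs_mul_abs_one_sub_div hy]
  nlinarith [neg_abs_le (1 - x / y), abs_nonneg y]

variable {α : Type*} {l : Filter α}

lemma isBigO_of_eventually_mul_abs_le {f g : α → ℝ} {c : ℝ} (hc : 0 < c)
    (h : ∀ᶠ n in l, c * |f n| ≤ |g n|) : f =O[l] g :=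
  IsBigO.of_bound c⁻¹ <| h.mono fun n hn => by
    rw [Real.norm_eq_abs, Real.norm_eq_abs, le_inv_mul_iff₀ hc]
    exact hn

lemma isBigO_sub_of_limsup_extendedRatio_lt_one {a b : α → ℝ}
    (h : limsup (fun n => extendedRatio (a n) (b n)) l < 1) : b =O[l] (b - a) := by
  obtain ⟨r, hlim, hr⟩ := EReal.exists_between_coe_real h
  refine isBigO_of_eventually_mul_abs_le (c := 1 - r) (by linarith [(by exact_mod_cast hr : r < 1)]) ?_
  filter_upwards [eventually_lt_of_limsup_lt hlim] with n hn
  exact one_sub_mul_abs_le_abs_sub_of_extendedRatio_lt hn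

lemma isBigO_sub_of_one_lt_liminf_extendedRatio {a b : α → ℝ}
    (h : 1 < liminf (fun n => extendedRatio (a n) (b n)) l) : b =O[l] (b - a) := by
  obtain ⟨r, hr, hlim⟩ := EReal.exists_between_coe_real h
  refine isBigO_of_eventually_mul_abs_le (c := r - 1) (by linarith [(by exact_mod_cast hr : 1 < r)]) ?_
  filter_upwards [eventually_lt_of_lt_liminf hlim] with n hn
  exact sub_one_mul_abs_le_abs_sub_of_lt_extendedRatio hn

theorem HasDerivAt.tendsto_slope_of_isBigO_sub {𝕜 F : Type*} [NontriviallyNormedField 𝕜]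
    [NormedAddCommGroup F] [NormedSpace 𝕜 F] {f : 𝕜 → F} {f' : F} {x : 𝕜} {a b : α → 𝕜}
    (hf : HasDerivAt f f' x) (ha : Tendsto a l (𝓝 0)) (hb : Tendsto b l (𝓝 0))
    (hne : ∀ᶠ n in l, a n ≠ b n) (hbO : b =O[l] (b - a)) :
    Tendsto (fun n => (b n - a n)⁻¹ • (f (x + b n) - f (x + a n))) l (𝓝 f') := by
  set φ : 𝕜 → F := fun h => f (x + h) - f x - h • f'
  have hφ : φ =o[𝓝 0] fun h => h := hasDerivAt_iff_isLittleO_nhds_zero.mp hf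
  have haO : a =O[l] (b - a) := by
    simpa using hbO.sub (isBigO_refl (b - a) l)
  have herr : (fun n => φ (b n) - φ (a n)) =o[l] (b - a) :=
    ((hφ.comp_tendsto hb).trans_isBigO hbO).sub ((hφ.comp_tendsto ha).trans_isBigO haO)
  have hslope : ∀ᶠ n in l, (b n - a n)⁻¹ • (f (x + b n) - f (x + a n))
      = f' + (b n - a n)⁻¹ • (φ (b n) - φ (a n)) := by
    filter_upwards [hne] with n hn
    have hd : b n - a n ≠ 0 := sub_ne_zero.mpr hn.symm
    have hφ_sub : φ (b n) - φ (a n) = f (x + b n) - f (x + a n) - (b n - a n) • f' := by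
      simp only [φ, sub_smul]
      abel
    rw [hφ_sub, smul_sub _ (_ - _), smul_smul, inv_mul_cancel₀ hd, one_smul]
    abel
  simpa using (tendsto_const_nhds.add herr.tendsto_inv_smul_nhds_zero).congr' <|
    hslope.mono fun n hn => hn.symm

/-- two-sided difference-quotient convergence. If `G` is differentiable at `u`,
`δ_{n,1}, δ_{n,2} → 0`, `δ_{n,1} ≠ δ_{n,2}`, and the ratio `δ_{n,1}/δ_{n,2}` (with the
convention `±∞` when `δ_{n,2} = 0`, according to the sign of `δ_{n,1}`) satisfies
`limsup < 1` or `liminf > 1`, then the difference quotient converges to `g(u)`. -/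
theorem statement11
    (G : ℝ → ℝ) (u gu : ℝ) (hG : HasDerivAt G gu u)
    (δ₁ δ₂ : ℕ → ℝ)
    (h1 : Tendsto δ₁ atTop (𝓝 0)) (h2 : Tendsto δ₂ atTop (𝓝 0))
    (hne : ∀ n, δ₁ n ≠ δ₂ n)
    (hcond :
      limsup (fun n => if δ₂ n = 0 then (if 0 < δ₁ n then (⊤ : EReal) else ⊥)
        else ((δ₁ n / δ₂ n : ℝ) : EReal)) atTop < (1 : EReal) ∨
      (1 : EReal) < liminf (fun n => if δ₂ n = 0 then (if 0 < δ₁ n then (⊤ : EReal) else ⊥)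
        else ((δ₁ n / δ₂ n : ℝ) : EReal)) atTop) :
    Tendsto (fun n => (G (u + δ₂ n) - G (u + δ₁ n)) / (δ₂ n - δ₁ n)) atTop (𝓝 gu) := by
  -- the ratio in `hcond` is `extendedRatio (δ₁ n) (δ₂ n)` unfolded
  have hO : δ₂ =O[atTop] (δ₂ - δ₁) := hcond.elim
    isBigO_sub_of_limsup_extendedRatio_lt_one isBigO_sub_of_one_lt_liminf_extendedRatio
  simpa only [smul_eq_mul, div_eq_inv_mul] using
    hG.tendsto_slope_of_isBigO_sub h1 h2 (Eventually.of_forall hne) hO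
end
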